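/- arXiv:2310.09613 — 11 statements merged into one kernel-verified Lean document; each statement's English description precedes it below -/
import Mathlib

section
/- Let k, Δ, m', n be natural numbers with m' ≥ 1 and n ≥ 1, and let B be a k-separable binary m'×n matrix. Let A be the ((Δ+1)·m')×n binary matrix obtained from B by repeating each row of B exactly Δ+1 consecutive times (rows (j−1)(Δ+1)+1 through j(Δ+1) of A all equal row j of B). Then A is (k,Δ)-deletion separable. -/
/-- `u` is a subsequence of `v` (obtained by deleting coordinates, keeping order). -/
def IsSubseq {α : Type*} {a b : ℕ} (u : Fin a → α) (v : Fin b → α) : Prop :=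
  ∃ f : Fin a → Fin b, StrictMono f ∧ ∀ i, u i = v (f i)

/-- Coordinate-wise OR of the columns of `A` indexed by `S`. -/
noncomputable def orSum {m n : ℕ} (A : Fin m → Fin n → Bool) (S : Finset (Fin n)) :
    Fin m → Bool :=
  fun r => S.sup fun i => A r i

/-- `A` is `k`-separable: OR-sums of any two distinct subsets of at most `k` columns differ. -/
def Separable {m n : ℕ} (k : ℕ) (A : Fin m → Fin n → Bool) : Prop :=
  ∀ S₁ S₂ : Finset (Fin n), S₁.card ≤ k → S₂.card ≤ k → S₁ ≠ S₂ →
    orSum A S₁ ≠ orSum A S₂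

/-- `A` is `(k, Δ)`-deletion separable: OR-sums of any two distinct subsets of at most `k`
columns have no common subsequence of length `m - Δ`. -/
def DelSeparable {m n : ℕ} (k Δ : ℕ) (A : Fin m → Fin n → Bool) : Prop :=
  ∀ S₁ S₂ : Finset (Fin n), S₁.card ≤ k → S₂.card ≤ k → S₁ ≠ S₂ →
    ¬ ∃ w : Fin (m - Δ) → Bool, IsSubseq w (orSum A S₁) ∧ IsSubseq w (orSum A S₂)

/-- `A` is `(k, Δ)`-deletion disjunct: for any `k+1` distinct columns `i 0, i 1, …, i k`,
every length-`(m-Δ)` subsequence `u` of column `i 0` and every length-`(m-Δ)` subsequence `v`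
of the OR of columns `i 1, …, i k` have a position `ℓ` with `u ℓ = 1` and `v ℓ = 0`. -/
def DelDisjunct {m n : ℕ} (k Δ : ℕ) (A : Fin m → Fin n → Bool) : Prop :=
  ∀ i : Fin (k + 1) → Fin n, Function.Injective i →
    ∀ u v : Fin (m - Δ) → Bool,
      IsSubseq u (fun r => A r (i 0)) →
      IsSubseq v (fun r => Finset.univ.sup fun s : Fin k => A r (i s.succ)) →
      ∃ ℓ, u ℓ = true ∧ v ℓ = false

lemma finStrictMono_le {a b : ℕ} (f : Fin a → Fin b) (hf : StrictMono f) :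
    ∀ i : Fin a, (i : ℕ) ≤ (f i : ℕ) := by
  rintro ⟨v, h⟩
  induction v with
  | zero => exact Nat.zero_le _
  | succ w ih =>
    have h' : w < a := Nat.lt_of_succ_lt h
    have hlt : f ⟨w, h'⟩ < f ⟨w + 1, h⟩ := hf (by simp [Fin.lt_def])
    have := ih h'
    have := Fin.lt_def.mp hlt
    have e1 : ((⟨w, h'⟩ : Fin a) : ℕ) = w := rfl
    have e2 : ((⟨w + 1, h⟩ : Fin a) : ℕ) = w + 1 := rfl
    omega

lemma finStrictMono_ub {a b : ℕ} (f : Fin a → Fin b) (hf : StrictMono f)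
    (i : Fin a) : (f i : ℕ) ≤ (i : ℕ) + (b - a) := by
  have hg : StrictMono (fun t : Fin a => Fin.rev (f (Fin.rev t))) := by
    intro s t hst
    exact Fin.rev_lt_rev.mpr (hf (Fin.rev_lt_rev.mpr hst))
  have h1 := finStrictMono_le _ hg i.rev
  simp only [Fin.rev_rev, Fin.val_rev] at h1
  have h2 : (f i : ℕ) < b := (f i).2
  have h3 : (i : ℕ) < a := i.2
  omega

/-- If `B` is a `k`-separable `m' × n` binary matrix (`m' ≥ 1`, `n ≥ 1`), and `A` is the
`((Δ+1)·m') × n` matrix obtained from `B` by repeating each row exactly `Δ+1` consecutive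
times, then `A` is `(k, Δ)`-deletion separable. -/
theorem repeated_separable_is_deletion_separable
    (k Δ m' n : ℕ) (hm' : 1 ≤ m') (hn : 1 ≤ n)
    (B : Fin m' → Fin n → Bool) (hB : Separable k B)
    (A : Fin ((Δ + 1) * m') → Fin n → Bool)
    (hA : ∀ (r : Fin ((Δ + 1) * m')) (i : Fin n),
      A r i = B ⟨r.1 / (Δ + 1), Nat.div_lt_of_lt_mul r.2⟩ i) :
    DelSeparable k Δ A := by
  rintro S₁ S₂ h1 h2 hne ⟨w, ⟨f, hfm, hfw⟩, ⟨g, hgm, hgw⟩⟩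
  apply hB S₁ S₂ h1 h2 hne
  funext j
  have hj : (j : ℕ) + 1 ≤ m' := j.2
  have hmul : ((j : ℕ) + 1) * (Δ + 1) ≤ m' * (Δ + 1) := Nat.mul_le_mul_right _ hj
  have hc : m' * (Δ + 1) = (Δ + 1) * m' := Nat.mul_comm _ _
  have hsm : ((j : ℕ) + 1) * (Δ + 1) = (j : ℕ) * (Δ + 1) + (Δ + 1) := Nat.succ_mul _ _
  have hD : Δ + 1 ≤ (Δ + 1) * m' := Nat.le_mul_of_pos_right _ hm'
  set i : Fin ((Δ + 1) * m' - Δ) := ⟨(j : ℕ) * (Δ + 1), by omega⟩ with hi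
  have hiv : (i : ℕ) = (j : ℕ) * (Δ + 1) := rfl
  have key : ∀ (p : Fin ((Δ + 1) * m' - Δ) → Fin ((Δ + 1) * m')), StrictMono p →
      ((p i : ℕ) / (Δ + 1) = (j : ℕ)) := by
    intro p hp
    have hl := finStrictMono_le p hp i
    have hu := finStrictMono_ub p hp i
    refine Nat.div_eq_of_lt_le (by omega) (by rw [hsm]; omega)
  have hfd := key f hfm
  have hgd := key g hgm
  have e1 : orSum A S₁ (f i) = orSum B S₁ j := by
    unfold orSum
    refine Finset.sup_congr rfl fun c _ => ?_
    rw [hA (f i) c]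
    congr 1
    exact Fin.ext hfd
  have e2 : orSum A S₂ (g i) = orSum B S₂ j := by
    unfold orSum
    refine Finset.sup_congr rfl fun c _ => ?_
    rw [hA (g i) c]
    congr 1
    exact Fin.ext hgd
  rw [← e1, ← e2, ← hfw i, ← hgw i]
end

section
/- Let A be a binary m×n matrix with n ≥ k+1. If A is (k,Δ)-deletion disjunct, then A is (k,Δ)-deletion separable. -/
lemma key_del {m n k Δ : ℕ} (hn : k + 1 ≤ n) (A : Fin m → Fin n → Bool)
    (hA : DelDisjunct k Δ A) (S₁ S₂ : Finset (Fin n))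
    (h₂ : S₂.card ≤ k) (i₀ : Fin n) (hi₁ : i₀ ∈ S₁) (hi₂ : i₀ ∉ S₂) :
    ¬ ∃ w : Fin (m - Δ) → Bool, IsSubseq w (orSum A S₁) ∧ IsSubseq w (orSum A S₂) := by
  rintro ⟨w, ⟨f, hf, hwf⟩, ⟨g, hg, hwg⟩⟩
  have hsub : S₂ ⊆ Finset.univ.erase i₀ := fun x hx =>
    Finset.mem_erase.2 ⟨fun h => hi₂ (h ▸ hx), Finset.mem_univ x⟩
  have hcard : k ≤ (Finset.univ.erase i₀ : Finset (Fin n)).card := by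
    rw [Finset.card_erase_of_mem (Finset.mem_univ i₀)]
    simpa using Nat.le_sub_one_of_lt hn
  obtain ⟨T, hST, hTe, hT⟩ := Finset.exists_subsuperset_card_eq hsub h₂ hcard
  set e : Fin k → Fin n := fun s => (T.orderIsoOfFin hT s : Fin n) with he
  have heT : ∀ s, e s ∈ T := fun s => (T.orderIsoOfFin hT s).2
  have hene : ∀ s, e s ≠ i₀ := fun s => (Finset.mem_erase.1 (hTe (heT s))).1
  have heinj : Function.Injective e := fun a b hab => by
    have := (T.orderIsoOfFin hT).injective (Subtype.ext hab); exact this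
  set i : Fin (k + 1) → Fin n := Fin.cases i₀ e with hi
  have hinj : Function.Injective i := by
    intro a b hab
    induction a using Fin.cases with
    | zero =>
      induction b using Fin.cases with
      | zero => rfl
      | succ b => simp only [hi, Fin.cases_zero, Fin.cases_succ] at hab
                  exact absurd hab.symm (hene b)
    | succ a =>
      induction b using Fin.cases with
      | zero => simp only [hi, Fin.cases_zero, Fin.cases_succ] at hab
                exact absurd hab (hene a)
      | succ b => simp only [hi, Fin.cases_succ] at hab
                  exact congrArg Fin.succ (heinj hab)
  have himg : Finset.univ.image e = T := by
    apply Finset.eq_of_subset_of_card_le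
    · intro x hx
      obtain ⟨s, _, rfl⟩ := Finset.mem_image.1 hx
      exact heT s
    · rw [hT, Finset.card_image_of_injective _ heinj, Finset.card_univ, Fintype.card_fin]
  obtain ⟨ℓ, hu, hv⟩ := hA i hinj (fun ℓ => A (f ℓ) i₀) (fun ℓ => T.sup fun j => A (g ℓ) j)
    ⟨f, hf, fun ℓ => by simp [hi]⟩
    ⟨g, hg, fun ℓ => by
      simp only [hi, Fin.cases_succ]
      rw [← himg, Finset.sup_image]
      rfl⟩
  have hw1 : w ℓ = true := by
    rw [hwf ℓ]
    have : A (f ℓ) i₀ ≤ orSum A S₁ (f ℓ) := Finset.le_sup hi₁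
    rw [hu] at this
    exact le_antisymm (Bool.le_true _) this
  have hw2 : w ℓ = false := by
    rw [hwg ℓ]
    have : orSum A S₂ (g ℓ) ≤ T.sup fun j => A (g ℓ) j := Finset.sup_mono hST
    rw [hv] at this
    exact le_antisymm this (Bool.false_le _)
  rw [hw1] at hw2; exact Bool.noConfusion hw2

/-- A `(k, Δ)`-deletion disjunct binary `m × n` matrix with `n ≥ k + 1` is also
`(k, Δ)`-deletion separable. -/
theorem deletion_disjunct_is_deletion_separable
    (m n k Δ : ℕ) (hn : k + 1 ≤ n)
    (A : Fin m → Fin n → Bool) (hA : DelDisjunct k Δ A) :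
    DelSeparable k Δ A := by
  intro S₁ S₂ h₁ h₂ hne hw
  by_cases hs : S₁ ⊆ S₂
  · have : ¬ S₂ ⊆ S₁ := fun h => hne (Finset.Subset.antisymm hs h)
    obtain ⟨i₀, hi₁, hi₂⟩ := Finset.not_subset.1 this
    obtain ⟨w, hwa, hwb⟩ := hw
    exact key_del hn A hA S₂ S₁ h₁ i₀ hi₁ hi₂ ⟨w, hwb, hwa⟩
  · obtain ⟨i₀, hi₁, hi₂⟩ := Finset.not_subset.1 hs
    exact key_del hn A hA S₁ S₂ h₂ i₀ hi₁ hi₂ hw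
end

section
/- Let A be a (k,Δ)-deletion disjunct binary m×n matrix with n ≥ k+1. Then for every choice of k+1 distinct column indices i₀,i₁,…,i_k, there are at least Δ+1 rows j ∈ [m] such that A[j,i₀] = 1 and A[j,i_s] = 0 for every s = 1,…,k. -/
/-- In a `(k, Δ)`-deletion disjunct matrix with `n ≥ k + 1`, for any `k+1` distinct columns
`i 0, …, i k`, at least `Δ + 1` rows have a `1` in column `i 0` and `0` in columns
`i 1, …, i k`. -/
theorem deletion_disjunct_many_private_rows
    (m n k Δ : ℕ) (hn : k + 1 ≤ n)
    (A : Fin m → Fin n → Bool) (hA : DelDisjunct k Δ A)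
    (i : Fin (k + 1) → Fin n) (hi : Function.Injective i) :
    Δ + 1 ≤ (Finset.univ.filter fun j : Fin m =>
      A j (i 0) = true ∧ ∀ s : Fin k, A j (i s.succ) = false).card := by

  by_contra h
  push_neg at h
  set P := (Finset.univ.filter fun j : Fin m =>
      A j (i 0) = true ∧ ∀ s : Fin k, A j (i s.succ) = false) with hP
  have hPcard : P.card ≤ Δ := Nat.lt_succ_iff.mp h
  have hcompl : m - Δ ≤ Pᶜ.card := by
    rw [Finset.card_compl, Fintype.card_fin]
    exact Nat.sub_le_sub_left hPcard m
  obtain ⟨T, hT, hTcard⟩ := Finset.exists_subset_card_eq hcompl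
  let e := T.orderIsoOfFin hTcard
  have hf : StrictMono fun ℓ => (e ℓ : Fin m) := fun a b hab => e.strictMono hab
  obtain ⟨ℓ, h1, h2⟩ := hA i hi
    (fun ℓ => A (e ℓ : Fin m) (i 0))
    (fun ℓ => Finset.univ.sup fun s : Fin k => A (e ℓ : Fin m) (i s.succ))
    ⟨_, hf, fun _ => rfl⟩ ⟨_, hf, fun _ => rfl⟩
  have hmem : (e ℓ : Fin m) ∈ Pᶜ := hT (e ℓ).2
  rw [Finset.mem_compl] at hmem
  apply hmem
  rw [hP, Finset.mem_filter]
  refine ⟨Finset.mem_univ _, h1, fun s => ?_⟩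
  have := (Finset.sup_eq_bot_iff _ _).mp h2 s (Finset.mem_univ s)
  exact this
end

section
/- Fix p ∈ (0,1) and natural numbers m, n, k, Δ with n ≥ k+1 and m ≥ Δ. Let A be a random m×n binary matrix whose mn entries are mutually independent, each equal to 1 with probability p. Then the probability that A is not (k,Δ)-deletion disjunct is at most (1 − p(1−p)^k)^{m−Δ} · C(m,Δ)² · C(n,k) · (n−k), where C(·,·) denotes the binomial coefficient. -/
open MeasureTheory

open scoped ENNReal

/-!
If `A` is not `(k, Δ)`-deletion disjunct, the offending columns and subsequences give a witness:
a set `S` of `k` columns, a column `c ∉ S` and sets `T₁, T₂` of `m - Δ` rows such that, for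
every `ℓ`, the `ℓ`-th row of `T₁` in column `c` followed by the `ℓ`-th row of `T₂` in the
columns of `S` does not read `(1, 0, …, 0)`. For a fixed witness these are `m - Δ` conditions
on disjoint blocks of `k + 1` independent entries, each failing with probability `p (1 - p)^k`.
A union bound over the `C(n,k) (n - k) C(m,Δ)²` witnesses gives the claim.
-/

section ProductMeasure

variable {β : Type*} [MeasurableSpace β] (ν : Measure β)

theorem measurePreserving_comp_of_injective [IsProbabilityMeasure ν] {ι κ : Type*} [Fintype ι]
    [Fintype κ] {φ : κ → ι} (hφ : Function.Injective φ) :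
    MeasurePreserving (fun f : ι → β => f ∘ φ)
      (Measure.pi fun _ : ι => ν) (Measure.pi fun _ : κ => ν) := by
  have hmeas : Measurable (fun f : ι → β => f ∘ φ) :=
    measurable_pi_lambda _ fun j => measurable_pi_apply (φ j)
  refine ⟨hmeas, (Measure.pi_eq fun s hs => ?_).symm⟩
  -- a box in the `κ` coordinates pulls back to a box in the `ι` coordinates, full off `range φ`
  set s' : ι → Set β := Function.extend φ s fun _ => Set.univ
  have hpre : (fun f : ι → β => f ∘ φ) ⁻¹' Set.univ.pi s = Set.univ.pi s' := by
    ext f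
    simp only [Set.mem_preimage, Set.mem_univ_pi, Function.comp_apply]
    refine ⟨fun hf i => ?_, fun hf j => by simpa [s', hφ.extend_apply] using hf (φ j)⟩
    by_cases hi : ∃ j, φ j = i
    · obtain ⟨j, rfl⟩ := hi
      simpa [s', hφ.extend_apply] using hf j
    · simp [s', Function.extend_apply' _ _ _ hi]
  rw [Measure.map_apply hmeas (MeasurableSet.univ_pi hs), hpre, Measure.pi_pi]
  refine (Fintype.prod_of_injective φ hφ _ _ (fun i hi => ?_) fun j => ?_).symm
  · simp [s', Function.extend_apply' _ _ _ hi]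
  · simp [s', hφ.extend_apply]

theorem measurePreserving_uncurry_pi [SigmaFinite ν] {α κ : Type*} [Fintype α] [Fintype κ] :
    MeasurePreserving (fun (h : α → κ → β) (q : α × κ) => h q.1 q.2)
      (Measure.pi fun _ : α => Measure.pi fun _ : κ => ν)
      (Measure.pi fun _ : α × κ => ν) := by
  have hmeas : Measurable (fun (h : α → κ → β) (q : α × κ) => h q.1 q.2) :=
    measurable_pi_iff.2 fun q => (measurable_pi_apply q.2).comp (measurable_pi_apply q.1)
  refine ⟨hmeas, (Measure.pi_eq fun s hs => ?_).symm⟩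
  have hpre : (fun (h : α → κ → β) (q : α × κ) => h q.1 q.2) ⁻¹' Set.univ.pi s
      = Set.univ.pi fun a => Set.univ.pi fun j => s (a, j) := by
    ext h
    simp [Set.mem_pi, Prod.forall]
  rw [Measure.map_apply hmeas (MeasurableSet.univ_pi hs), hpre, Measure.pi_pi]
  simp_rw [Measure.pi_pi]
  exact (Fintype.prod_prod_type fun q => ν (s q)).symm

theorem pi_setOf_forall_block_mem [IsProbabilityMeasure ν] {ι : Type*} [Fintype ι] {t c : ℕ}
    {φ : Fin t × Fin c → ι} (hφ : Function.Injective φ)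
    {D : Fin t → Set (Fin c → β)} (hD : ∀ ℓ, MeasurableSet (D ℓ)) :
    Measure.pi (fun _ : ι => ν) {f | ∀ ℓ, (fun j => f (φ (ℓ, j))) ∈ D ℓ}
      = ∏ ℓ, Measure.pi (fun _ : Fin c => ν) (D ℓ) := by
  set G : Set (Fin t × Fin c → β) := (fun g ℓ j => g (ℓ, j)) ⁻¹' Set.univ.pi D
  have hG : MeasurableSet G := by
    have : Measurable fun (g : Fin t × Fin c → β) ℓ j => g (ℓ, j) := by fun_prop
    exact this (MeasurableSet.univ_pi hD)
  have hset : {f : ι → β | ∀ ℓ, (fun j => f (φ (ℓ, j))) ∈ D ℓ}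
      = (fun f : ι → β => f ∘ φ) ⁻¹' G := by
    ext f
    simp [G]
  rw [hset, (measurePreserving_comp_of_injective ν hφ).measure_preimage hG.nullMeasurableSet,
    ← (measurePreserving_uncurry_pi ν).measure_preimage hG.nullMeasurableSet]
  have hbox : (fun (h : Fin t → Fin c → β) (q : Fin t × Fin c) => h q.1 q.2) ⁻¹' G
      = Set.univ.pi D := by
    ext h
    simp [G]
  rw [hbox, Measure.pi_pi]

end ProductMeasure

theorem Finset.orderEmbOfFin_image_univ {α : Type*} [LinearOrder α] {t : ℕ} {a : Fin t → α}
    (ha : StrictMono a) (h : (Finset.univ.image a).card = t) :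
    ⇑((Finset.univ.image a).orderEmbOfFin h) = a :=
  (Finset.orderEmbOfFin_unique h (fun x => Finset.mem_image_of_mem a (Finset.mem_univ x)) ha).symm

open scoped NNReal

def violationPattern (k : ℕ) : Fin (k + 1) → Bool :=
  Fin.cons true fun _ => false

theorem pi_bernoulli_violationPattern (q : ℝ≥0) (hq : q ≤ 1) (k : ℕ) :
    Measure.pi (fun _ : Fin (k + 1) => (PMF.bernoulli q hq).toMeasure) {violationPattern k}
      = q * (1 - q) ^ k := by
  simp [Fin.prod_univ_succ, violationPattern, PMF.bernoulli_apply, ENNReal.coe_sub]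

/-- A candidate violation of `(k, Δ)`-deletion disjunctness with `t = m - Δ`: a set `S` of `k`
columns, a column `c ∉ S`, and the rows `T₁`, `T₂` kept in column `c` and in the OR of `S`. -/
abbrev Witness (m n k t : ℕ) : Type :=
  (Σ S : {S : Finset (Fin n) // S.card = k}, {c : Fin n // c ∉ S.1}) ×
    {T : Finset (Fin m) // T.card = t} × {T : Finset (Fin m) // T.card = t}

namespace Witness

variable {m n k t : ℕ}

def entries : Witness m n k t → Fin t × Fin (k + 1) → Fin m × Fin n
  | ⟨⟨S, c⟩, T₁, T₂⟩, (ℓ, j) =>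
    Fin.cases (T₁.1.orderEmbOfFin T₁.2 ℓ, c.1)
      (fun s => (T₂.1.orderEmbOfFin T₂.2 ℓ, S.1.orderEmbOfFin S.2 s)) j

theorem entries_injective (w : Witness m n k t) : Function.Injective w.entries := by
  obtain ⟨⟨S, c⟩, T₁, T₂⟩ := w
  rintro ⟨ℓ, j⟩ ⟨ℓ', j'⟩ h
  cases j using Fin.cases <;> cases j' using Fin.cases <;>
    simp only [entries, Fin.cases_zero, Fin.cases_succ, Prod.mk.injEq,
      OrderEmbedding.eq_iff_eq, Fin.succ_inj, and_true] at h ⊢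
  · exact h
  · exact absurd (h.2 ▸ S.1.orderEmbOfFin_mem S.2 _) c.2
  · exact absurd (h.2.symm ▸ S.1.orderEmbOfFin_mem S.2 _) c.2
  · exact h

theorem card : Fintype.card (Witness m n k t) = n.choose k * (n - k) * m.choose t ^ 2 := by
  have hcompl (S : {S : Finset (Fin n) // S.card = k}) :
      Fintype.card {c : Fin n // c ∉ S.1} = n - k := by
    rw [Fintype.card_subtype_compl, Fintype.card_coe, S.2, Fintype.card_fin]
  simp only [Fintype.card_prod, Fintype.card_sigma, hcompl, Finset.sum_const,
    Finset.card_univ, Fintype.card_finset_len, Fintype.card_fin, smul_eq_mul]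
  ring

theorem exists_of_not_delDisjunct {Δ : ℕ} {f : Fin m × Fin n → Bool}
    (hf : ¬ DelDisjunct k Δ fun r c => f (r, c)) :
    ∃ w : Witness m n k (m - Δ),
      ∀ ℓ, (fun j => f (w.entries (ℓ, j))) ≠ violationPattern k := by
  simp only [DelDisjunct, not_forall, not_exists, not_and, Bool.not_eq_false] at hf
  obtain ⟨i, hi, u, v, ⟨a, ha, hua⟩, ⟨b, hb, hvb⟩, huv⟩ := hf
  have hS : (Finset.univ.image (i ∘ Fin.succ)).card = k := by
    rw [Finset.card_image_of_injective _ (hi.comp (Fin.succ_injective k)), Finset.card_fin]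
  have hc : i 0 ∉ Finset.univ.image (i ∘ Fin.succ) := by
    simp [hi.eq_iff]
  have hT {g : Fin (m - Δ) → Fin m} (hg : StrictMono g) :
      (Finset.univ.image g).card = m - Δ := by
    rw [Finset.card_image_of_injective _ hg.injective, Finset.card_fin]
  refine ⟨⟨⟨⟨_, hS⟩, ⟨i 0, hc⟩⟩, ⟨_, hT ha⟩, ⟨_, hT hb⟩⟩, fun ℓ hpat => ?_⟩
  have hcol : u ℓ = true := by
    simpa [entries, violationPattern, Finset.orderEmbOfFin_image_univ ha, ← hua]
      using congrFun hpat 0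
  have hrow (s : Fin k) : f (b ℓ, i s.succ) = false := by
    obtain ⟨s', hs'⟩ :
        i s.succ ∈ Set.range ((Finset.univ.image (i ∘ Fin.succ)).orderEmbOfFin hS) := by
      simp [Finset.range_orderEmbOfFin]
    simpa [entries, violationPattern, Finset.orderEmbOfFin_image_univ hb, hs']
      using congrFun hpat s'.succ
  have hor : v ℓ = false :=
    (hvb ℓ).trans ((Finset.sup_eq_bot_iff _ _).2 fun s _ => hrow s)
  exact Bool.false_ne_true (hor ▸ huv ℓ hcol)

theorem pi_bernoulli_setOf_forall_ne_violationPattern (q : ℝ≥0) (hq : q ≤ 1)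
    (w : Witness m n k t) :
    Measure.pi (fun _ : Fin m × Fin n => (PMF.bernoulli q hq).toMeasure)
        {f | ∀ ℓ, (fun j => f (w.entries (ℓ, j))) ≠ violationPattern k}
      = (1 - q * (1 - q) ^ k) ^ t := by
  have hD : MeasurableSet ({violationPattern k}ᶜ : Set (Fin (k + 1) → Bool)) :=
    (measurableSet_singleton _).compl
  simp only [← Set.mem_compl_singleton_iff]
  rw [pi_setOf_forall_block_mem _ w.entries_injective fun _ => hD]
  simp only [measure_compl (measurableSet_singleton _) (measure_ne_top _ _), measure_univ,
    pi_bernoulli_violationPattern, Finset.prod_const, Finset.card_fin]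

end Witness

/-- A random `m × n` binary matrix with i.i.d. Bernoulli(`p`) entries, `p ∈ (0,1)`,
`n ≥ k+1`, `m ≥ Δ`, fails to be `(k, Δ)`-deletion disjunct with probability at most
`(1 - p(1-p)^k)^(m-Δ) · C(m,Δ)² · C(n,k) · (n-k)`. -/
theorem random_matrix_deletion_disjunct_failure_bound
    (m n k Δ : ℕ) (hm : Δ ≤ m)
    (p : ℝ≥0∞) (hp1 : p < 1) :
    Measure.pi (fun _ : Fin m × Fin n => (PMF.bernoulli p.toNNReal (by simpa using (ENNReal.toNNReal_le_toNNReal hp1.ne_top ENNReal.one_ne_top).2 hp1.le)).toMeasure)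
      {f : Fin m × Fin n → Bool | ¬ DelDisjunct k Δ (fun r c => f (r, c))} ≤
    (1 - p * (1 - p) ^ k) ^ (m - Δ) * (m.choose Δ : ℝ≥0∞) ^ 2 *
      (n.choose k : ℝ≥0∞) * ((n - k : ℕ) : ℝ≥0∞) := by
  have hcover : {f : Fin m × Fin n → Bool | ¬ DelDisjunct k Δ (fun r c => f (r, c))} ⊆
      ⋃ w : Witness m n k (m - Δ),
        {f | ∀ ℓ, (fun j => f (w.entries (ℓ, j))) ≠ violationPattern k} :=
    fun f hf => Set.mem_iUnion.2 (Witness.exists_of_not_delDisjunct hf)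
  refine (measure_mono hcover).trans ((measure_iUnion_fintype_le _ _).trans (le_of_eq ?_))
  rw [Finset.sum_congr rfl fun w _ => w.pi_bernoulli_setOf_forall_ne_violationPattern _ _]
  simp only [ENNReal.coe_toNNReal hp1.ne_top, Finset.sum_const, Finset.card_univ, Witness.card,
    Nat.choose_symm hm, nsmul_eq_mul]
  push_cast
  ring
end

section
/- Let m, n, k, Δ be natural numbers with n ≥ k+1 and m ≥ Δ. If there exists p ∈ (0,1) such that (1 − p(1−p)^k)^{m−Δ} · C(m,Δ)² · C(n,k) · (n−k) < 1, where C(·,·) denotes the binomial coefficient, then there exists a (k,Δ)-deletion disjunct binary m×n matrix. -/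
/-!
Probabilistic method: fill the matrix with independent Bernoulli(p) entries. A matrix that is
not (k, Δ)-deletion disjunct has a witness: a column i₀, a set S of k other columns and two
sets of m - Δ kept rows, enumerated increasingly by f and g, such that at every position ℓ a 1 of
column i₀ in row f ℓ is matched by a 1 in row g ℓ of some column of S. For a fixed witness the
entries read at different positions are distinct (f and g are injective and i₀ ∉ S), so the
positions are independent and each is covered with probability 1 - p(1-p)^k. A union bound over
the C(n,k)(n-k)C(m,Δ)² witnesses leaves a matrix without any.
-/

open Finset

noncomputable def coinWeight (p : ℝ) (b : Bool) : ℝ := if b then p else 1 - p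

noncomputable def coinExpect {ι : Type*} [Fintype ι] [DecidableEq ι] (p : ℝ)
    (G : (ι → Bool) → ℝ) : ℝ :=
  ∑ B, G B * ∏ i, coinWeight p (B i)

lemma coinWeight_nonneg {p : ℝ} (hp0 : 0 ≤ p) (hp1 : p ≤ 1) (b : Bool) : 0 ≤ coinWeight p b := by
  cases b <;> simp [coinWeight] <;> linarith

lemma sum_prod_coinWeight {ι : Type*} [Fintype ι] [DecidableEq ι] (p : ℝ) :
    ∑ B : ι → Bool, ∏ i, coinWeight p (B i) = 1 := by
  rw [← Fintype.prod_sum fun _ : ι => coinWeight p]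
  simp [coinWeight]

namespace coinExpect

variable {ι κ : Type*} [Fintype ι] [DecidableEq ι] [Fintype κ] [DecidableEq κ] {p : ℝ}

lemma const (p c : ℝ) : coinExpect p (fun _ : ι → Bool => c) = c := by
  rw [coinExpect, ← mul_sum, sum_prod_coinWeight, mul_one]

lemma mono (hp0 : 0 ≤ p) (hp1 : p ≤ 1) {G H : (ι → Bool) → ℝ} (h : ∀ B, G B ≤ H B) :
    coinExpect p G ≤ coinExpect p H :=
  sum_le_sum fun B _ => mul_le_mul_of_nonneg_right (h B)
    (prod_nonneg fun _ _ => coinWeight_nonneg hp0 hp1 _)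

lemma finset_sum {τ : Type*} (T : Finset τ) (G : τ → (ι → Bool) → ℝ) :
    coinExpect p (fun B => ∑ t ∈ T, G t B) = ∑ t ∈ T, coinExpect p (G t) := by
  simp only [coinExpect, sum_mul]
  exact sum_comm

lemma comp_equiv (σ : κ ≃ ι) (G : (ι → Bool) → ℝ) :
    coinExpect p (fun A : κ → Bool => G (A ∘ σ.symm)) = coinExpect p G := by
  rw [coinExpect, coinExpect, ← (σ.arrowCongr (Equiv.refl Bool)).sum_comp
    (fun B => G B * ∏ i, coinWeight p (B i))]
  refine sum_congr rfl fun A _ => congrArg (G (A ∘ σ.symm) * ·) ?_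
  rw [← σ.prod_comp]
  simp [Equiv.arrowCongr_apply]

lemma comp_inl {κ' : Type*} [Fintype κ'] [DecidableEq κ'] (G : (κ → Bool) → ℝ) :
    coinExpect p (fun A : κ ⊕ κ' → Bool => G (A ∘ Sum.inl)) = coinExpect p G := by
  rw [coinExpect, ← (Equiv.sumArrowEquivProdArrow κ κ' Bool).symm.sum_comp, Fintype.sum_prod_type]
  refine sum_congr rfl fun A _ => ?_
  have hA : ∀ A', (Equiv.sumArrowEquivProdArrow κ κ' Bool).symm (A, A') ∘ Sum.inl = A :=
    fun _ => rfl
  simp only [hA, Fintype.prod_sum_type, Equiv.sumArrowEquivProdArrow_symm_apply_inl,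
    Equiv.sumArrowEquivProdArrow_symm_apply_inr, ← mul_assoc, ← mul_sum, sum_prod_coinWeight,
    mul_one]

lemma comp_injective {e : κ → ι} (he : Function.Injective e) (G : (κ → Bool) → ℝ) :
    coinExpect p (fun A : ι → Bool => G (A ∘ e)) = coinExpect p G := by
  classical
  let σ : κ ⊕ ↥(Set.range e)ᶜ ≃ ι :=
    ((Equiv.ofInjective e he).sumCongr (Equiv.refl _)).trans (Equiv.Set.sumCompl _)
  have hσ : σ.symm ∘ e = Sum.inl := by
    funext j
    exact σ.symm_apply_eq.2 (by simp [σ])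
  rw [← comp_inl (κ' := ↥(Set.range e)ᶜ) G, ← comp_equiv σ]
  simp only [Function.comp_assoc, hσ]

lemma prod_rows {α β : Type*} [Fintype α] [DecidableEq α] [Fintype β] [DecidableEq β]
    (G : α → (β → Bool) → ℝ) :
    coinExpect p (fun B : α × β → Bool => ∏ a, G a fun b => B (a, b)) =
      ∏ a, coinExpect p (G a) := by
  rw [coinExpect, ← (Equiv.curry α β Bool).symm.sum_comp]
  simp only [coinExpect, Fintype.prod_sum, Fintype.prod_prod_type, ← prod_mul_distrib]
  rfl

lemma indicator_ne (x : ι → Bool) :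
    coinExpect p (fun C => if C ≠ x then 1 else 0) = 1 - ∏ i, coinWeight p (x i) := by
  have h : ∀ C : ι → Bool, (if C ≠ x then (1 : ℝ) else 0) = 1 - if C = x then 1 else 0 := by
    intro C
    by_cases hC : C = x <;> simp [hC]
  simp only [h, coinExpect, sub_mul, sum_sub_distrib, one_mul, sum_prod_coinWeight, ite_mul,
    zero_mul, sum_ite_eq', mem_univ, if_true]

end coinExpect

lemma exists_forall_not_of_card_mul_lt_one {ι τ : Type*} [Fintype ι] [DecidableEq ι] {p q : ℝ}
    (hp0 : 0 ≤ p) (hp1 : p ≤ 1) (T : Finset τ) (E : τ → (ι → Bool) → Prop)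
    [∀ t, DecidablePred (E t)]
    (hE : ∀ t ∈ T, coinExpect p (fun B => if E t B then 1 else 0) ≤ q) (hT : T.card * q < 1) :
    ∃ B, ∀ t ∈ T, ¬ E t B := by
  by_contra! hcover
  have hsum : ∀ B, (1 : ℝ) ≤ ∑ t ∈ T, if E t B then 1 else 0 := by
    intro B
    obtain ⟨t, ht, hEt⟩ := hcover B
    calc (1 : ℝ) = if E t B then 1 else 0 := (if_pos hEt).symm
      _ ≤ ∑ t ∈ T, if E t B then 1 else 0 :=
        single_le_sum (f := fun t => if E t B then (1 : ℝ) else 0)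
          (fun t _ => by positivity) ht
  have : (1 : ℝ) ≤ T.card * q :=
    calc (1 : ℝ) = coinExpect p (fun _ => 1) := (coinExpect.const p 1).symm
      _ ≤ coinExpect p (fun B => ∑ t ∈ T, if E t B then 1 else 0) :=
        coinExpect.mono hp0 hp1 hsum
      _ = ∑ t ∈ T, coinExpect p (fun B => if E t B then 1 else 0) := coinExpect.finset_sum T _
      _ ≤ ∑ t ∈ T, q := sum_le_sum hE
      _ = T.card * q := by rw [sum_const, nsmul_eq_mul]
  linarith

def DeletionCovered {R C : Type*} {L : ℕ} (A : R → C → Bool) (i₀ : C) (S : Finset C)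
    (f g : Fin L → R) : Prop :=
  ∀ ℓ, A (f ℓ) i₀ = true → ∃ j ∈ S, A (g ℓ) j = true

instance {R C : Type*} {L : ℕ} (A : R → C → Bool) (i₀ : C) (S : Finset C) (f g : Fin L → R) :
    Decidable (DeletionCovered A i₀ S f g) := by
  unfold DeletionCovered; infer_instance

lemma exists_deletionCovered_of_not_delDisjunct {m n k Δ : ℕ} {A : Fin m → Fin n → Bool}
    (hA : ¬ DelDisjunct k Δ A) :
    ∃ (S : Finset (Fin n)) (i₀ : Fin n) (f g : Fin (m - Δ) ↪o Fin m),
      S.card = k ∧ i₀ ∉ S ∧ DeletionCovered A i₀ S f g := by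
  simp only [DelDisjunct, not_forall, not_exists, not_and] at hA
  obtain ⟨i, hi, u, v, ⟨f, hf, hu⟩, ⟨g, hg, hv⟩, huv⟩ := hA
  refine ⟨univ.image (i ∘ Fin.succ), i 0, .ofStrictMono f hf, .ofStrictMono g hg,
    ?_, ?_, fun ℓ hℓ => ?_⟩
  · rw [card_image_of_injective _ (hi.comp (Fin.succ_injective k)), card_univ, Fintype.card_fin]
  · simp only [mem_image, mem_univ, true_and, Function.comp_apply, not_exists]
    exact fun s hs => Fin.succ_ne_zero s (hi hs)
  · have hvℓ : v ℓ = true := by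
      simpa using huv ℓ (by simpa [hu ℓ] using hℓ)
    rw [hv ℓ] at hvℓ
    obtain ⟨s, -, hs⟩ := Finset.lt_sup_iff.1 (hvℓ ▸ Bool.false_lt_true)
    exact ⟨i s.succ, mem_image_of_mem _ (mem_univ s), Bool.of_not_eq_false (ne_of_gt hs)⟩

lemma coinExpect_deletionCovered {R C : Type*} [Fintype R] [DecidableEq R] [Fintype C]
    [DecidableEq C] {L : ℕ} {i₀ : C} {S : Finset C} (hi₀ : i₀ ∉ S) {f g : Fin L → R}
    (hf : Function.Injective f) (hg : Function.Injective g) (p : ℝ) :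
    coinExpect p (fun B : R × C → Bool =>
        if DeletionCovered (fun r c => B (r, c)) i₀ S f g then 1 else 0) =
      (1 - p * (1 - p) ^ S.card) ^ L := by
  let e : Fin L × Option S → R × C := fun x => x.2.elim (f x.1, i₀) fun j => (g x.1, j)
  have he : Function.Injective e := by
    rintro ⟨ℓ, _ | j⟩ ⟨ℓ', _ | j'⟩ h <;> simp only [e, Option.elim, Prod.mk.injEq] at h
    · rw [hf h.1]
    · exact absurd (h.2 ▸ j'.2) hi₀
    · exact absurd (h.2 ▸ j.2) hi₀
    · rw [hg h.1, Subtype.ext h.2]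
  -- position `ℓ` is covered unless its coordinates under `e` read `true, false, …, false`
  have hcov : ∀ B : R × C → Bool, DeletionCovered (fun r c => B (r, c)) i₀ S f g ↔
      ∀ ℓ, (fun o => B (e (ℓ, o))) ≠ fun o => o.isNone := by
    intro B
    refine forall_congr' fun ℓ => ?_
    simp [e, funext_iff, Option.forall, imp_iff_not_or]
  let coveredRow : (Option S → Bool) → ℝ := fun C => if C ≠ fun o => o.isNone then 1 else 0
  have hind : ∀ B : R × C → Bool,
      (if DeletionCovered (fun r c => B (r, c)) i₀ S f g then 1 else 0) =
        ∏ ℓ, coveredRow fun o => (B ∘ e) (ℓ, o) := by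
    intro B
    simp only [coveredRow, Function.comp_apply, Fintype.prod_boole, hcov B]
    congr 1
  simp only [hind]
  rw [coinExpect.comp_injective he fun D => ∏ ℓ, coveredRow fun o => D (ℓ, o),
    coinExpect.prod_rows fun _ => coveredRow, prod_const, card_univ, Fintype.card_fin]
  simp only [coveredRow]
  rw [coinExpect.indicator_ne]
  simp [Fintype.prod_option, coinWeight]

lemma card_sigma_compl_powersetCard {α : Type*} [Fintype α] [DecidableEq α] (k : ℕ) :
    ((powersetCard k (univ : Finset α)).sigma fun S => Sᶜ).card =
      (Fintype.card α).choose k * (Fintype.card α - k) := by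
  rw [card_sigma, sum_congr rfl fun S hS => by rw [card_compl, mem_powersetCard_univ.1 hS],
    sum_const, card_powersetCard, card_univ, smul_eq_mul]

lemma card_fin_orderEmbedding (L : ℕ) (I : Type*) [Fintype I] [LinearOrder I] :
    Fintype.card (Fin L ↪o I) = (Fintype.card I).choose L := by
  rw [← Nat.card_eq_fintype_card, Nat.card_congr Set.powersetCard.ofFinEmbEquiv,
    Set.powersetCard.card, Nat.card_eq_fintype_card]

theorem exists_deletion_disjunct_of_probabilistic_bound_general
    (m n k Δ : ℕ) (hm : Δ ≤ m)
    (h : ∃ p : ℝ, 0 < p ∧ p < 1 ∧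
      (1 - p * (1 - p) ^ k) ^ (m - Δ) * (m.choose Δ : ℝ) ^ 2 *
        (n.choose k : ℝ) * ((n - k : ℕ) : ℝ) < 1) :
    ∃ A : Fin m → Fin n → Bool, DelDisjunct k Δ A := by
  obtain ⟨p, hp0, hp1, hlt⟩ := h
  let T := ((powersetCard k (univ : Finset (Fin n))).sigma fun S => Sᶜ) ×ˢ
    (univ : Finset ((Fin (m - Δ) ↪o Fin m) × (Fin (m - Δ) ↪o Fin m)))
  have hT : (T.card : ℝ) = n.choose k * (n - k : ℕ) * m.choose Δ ^ 2 := by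
    rw [card_product, card_sigma_compl_powersetCard, card_univ, Fintype.card_prod,
      card_fin_orderEmbedding, Fintype.card_fin, Fintype.card_fin, Nat.choose_symm hm]
    push_cast
    ring
  have hE : ∀ t ∈ T, coinExpect p (fun B : Fin m × Fin n → Bool =>
      if DeletionCovered (fun r c => B (r, c)) t.1.2 t.1.1 t.2.1 t.2.2 then 1 else 0) ≤
        (1 - p * (1 - p) ^ k) ^ (m - Δ) := by
    rintro ⟨⟨S, i₀⟩, f, g⟩ ht
    simp only [T, mem_product, mem_sigma, mem_powersetCard_univ, mem_compl] at ht
    rw [coinExpect_deletionCovered ht.1.2 f.injective g.injective, ht.1.1]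
  obtain ⟨B, hB⟩ := exists_forall_not_of_card_mul_lt_one hp0.le hp1.le T _ hE
    (by rw [hT]; linarith)
  refine ⟨fun r c => B (r, c), by_contra fun hA => ?_⟩
  obtain ⟨S, i₀, f, g, hS, hi₀, hcov⟩ := exists_deletionCovered_of_not_delDisjunct hA
  exact hB ⟨⟨S, i₀⟩, f, g⟩ (by simp [T, hS, hi₀]) hcov

/-- If for some `p ∈ (0,1)` the union bound
`(1 - p(1-p)^k)^(m-Δ) · C(m,Δ)² · C(n,k) · (n-k)` is less than `1` (with `n ≥ k+1`,
`m ≥ Δ`), then a `(k, Δ)`-deletion disjunct binary `m × n` matrix exists. -/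
theorem exists_deletion_disjunct_of_probabilistic_bound
    (m n k Δ : ℕ) (hn : k + 1 ≤ n) (hm : Δ ≤ m)
    (h : ∃ p : ℝ, 0 < p ∧ p < 1 ∧
      (1 - p * (1 - p) ^ k) ^ (m - Δ) * (m.choose Δ : ℝ) ^ 2 *
        (n.choose k : ℝ) * ((n - k : ℕ) : ℝ) < 1) :
    ∃ A : Fin m → Fin n → Bool, DelDisjunct k Δ A :=
  exists_deletion_disjunct_of_probabilistic_bound_general m n k Δ hm h
end

section
/- Let A be a (k,Δ)-deletion disjunct binary m×n matrix with n ≥ k+1. Let S ⊆ [n] with |S| ≤ k, let y = ⋁_{i∈S} A_i, and let ỹ be any subsequence of y of length m−Δ. Then for every column index j ∈ [n]: j ∈ S if and only if there exists a subsequence z of the column A_j of length m−Δ with z ≤ ỹ. -/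
/-- Decoding with a `(k, Δ)`-deletion disjunct matrix: given test outcomes `yTilde` that form a
length-`(m-Δ)` subsequence of the OR of the defective columns `S` (`|S| ≤ k`, `n ≥ k+1`),
a column `j` is defective iff some length-`(m-Δ)` subsequence of column `j` is
coordinate-wise dominated by `yTilde`. -/
theorem deletion_disjunct_decoding
    (m n k Δ : ℕ) (hn : k + 1 ≤ n)
    (A : Fin m → Fin n → Bool) (hA : DelDisjunct k Δ A)
    (S : Finset (Fin n)) (hS : S.card ≤ k)
    (yTilde : Fin (m - Δ) → Bool) (hyTilde : IsSubseq yTilde (orSum A S)) :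
    ∀ j : Fin n, j ∈ S ↔
      ∃ z : Fin (m - Δ) → Bool, IsSubseq z (fun r => A r j) ∧ ∀ ℓ, z ℓ ≤ yTilde ℓ := by

  obtain ⟨f, hf, hfy⟩ := hyTilde
  intro j
  constructor
  · intro hj
    refine ⟨fun ℓ => A (f ℓ) j, ⟨f, hf, fun ℓ => rfl⟩, ?_⟩
    intro ℓ
    rw [hfy ℓ]
    exact Finset.le_sup hj
  · rintro ⟨z, hzsub, hzle⟩
    by_contra hj
    have hSsub : S ⊆ Finset.univ \ {j} := by
      intro a ha
      simp only [Finset.mem_sdiff, Finset.mem_univ, Finset.mem_singleton, true_and]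
      rintro rfl; exact hj ha
    have hcard : k ≤ (Finset.univ \ {j} : Finset (Fin n)).card := by
      rw [Finset.card_sdiff_of_subset (by simp)]
      simp only [Finset.card_univ, Fintype.card_fin, Finset.card_singleton]
      omega
    obtain ⟨T, hST, hTsub, hTcard⟩ := Finset.exists_subsuperset_card_eq hSsub hS hcard
    have e := T.orderIsoOfFin hTcard
    set i : Fin (k + 1) → Fin n := Fin.cases j (fun s => (e s : Fin n)) with hi
    have hjnT : j ∉ T := by
      intro h
      have := hTsub h
      simp at this
    have hinj : Function.Injective i := by
      intro a b hab
      induction a using Fin.cases with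
      | zero =>
        induction b using Fin.cases with
        | zero => rfl
        | succ b =>
          exfalso
          simp only [hi, Fin.cases_zero, Fin.cases_succ] at hab
          exact hjnT (hab ▸ (e b).2)
      | succ a =>
        induction b using Fin.cases with
        | zero =>
          exfalso
          simp only [hi, Fin.cases_zero, Fin.cases_succ] at hab
          exact hjnT (hab ▸ (e a).2)
        | succ b =>
          simp only [hi, Fin.cases_succ] at hab
          have : e a = e b := Subtype.ext hab
          rw [e.injective this]
    have hvsub : IsSubseq (fun ℓ => Finset.univ.sup fun s : Fin k => A (f ℓ) (i s.succ))
        (fun r => Finset.univ.sup fun s : Fin k => A r (i s.succ)) :=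
      ⟨f, hf, fun ℓ => rfl⟩
    have hzsub' : IsSubseq z (fun r => A r (i 0)) := by
      simpa only [hi, Fin.cases_zero] using hzsub
    obtain ⟨ℓ, hz1, hv0⟩ := hA i hinj z _ hzsub' hvsub
    have hle : yTilde ℓ ≤ Finset.univ.sup fun s : Fin k => A (f ℓ) (i s.succ) := by
      rw [hfy ℓ]
      apply Finset.sup_le
      intro a ha
      have haT : a ∈ T := hST ha
      have heq : A (f ℓ) a = A (f ℓ) (i (e.symm ⟨a, haT⟩).succ) := by
        rw [hi]
        simp only [Fin.cases_succ, e.apply_symm_apply]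
      rw [heq]
      exact Finset.le_sup (f := fun s : Fin k => A (f ℓ) (i s.succ)) (Finset.mem_univ _)
    have := le_trans (hzle ℓ) hle
    rw [hz1, hv0] at this
    exact absurd this (by simp)
end

section
/- Let t ≤ m be natural numbers, let y be a binary list of length m−t and z a binary list of length m. Then g(y, z, t) = true if and only if there exists a subsequence x of z of length m−t with x ≤ y. -/
/-- The greedy coverage function: `g y z t` decides whether `z` can be turned, by at most `t`
deletions, into a vector coordinate-wise dominated by `y`. It scans both lists, advancing on
both when `y`'s head dominates `z`'s head, and otherwise (head of `y` is `0`, head of `z` is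
`1`) deleting `z`'s head at the cost of one of the `t` allowed deletions. -/
def g : List Bool → List Bool → ℕ → Bool
  | [], _, _ => true
  | _ :: _, [], _ => false
  | b :: y', c :: z', t =>
    if c ≤ b then g y' z' t
    else
      match t with
      | 0 => false
      | t' + 1 => g (b :: y') z' t'
termination_by _ z _ => z.length

/-!
`ExistsSublistForall₂ (· ≤ ·) z y` obeys the same recursion as `g`. If `c ≤ b`, matching `c`
against `b` loses nothing, since any witness for `c :: z` and `b :: y` can be made to start with
`c`; if `c ≰ b`, no witness can use `c` at all. The budget `t` matters only once it is exhausted: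
then `z` is no longer than `y`, so a witness would have to be all of `z`, whose head `c` is not
dominated by `b`.
-/

section ExistsSublistForall₂

variable {α β : Type*} (R : α → β → Prop)

def ExistsSublistForall₂ (z : List α) (y : List β) : Prop :=
  ∃ x, x.Sublist z ∧ List.Forall₂ R x y

variable {R}

theorem existsSublistForall₂_nil_right (z : List α) : ExistsSublistForall₂ R z [] :=
  ⟨[], List.nil_sublist z, .nil⟩

theorem not_existsSublistForall₂_nil_cons (b : β) (y : List β) :
    ¬ ExistsSublistForall₂ R [] (b :: y) := by
  rintro ⟨x, hx, hxy⟩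
  rw [List.sublist_nil.mp hx] at hxy
  cases hxy

theorem ExistsSublistForall₂.length_le {z : List α} {y : List β}
    (h : ExistsSublistForall₂ R z y) : y.length ≤ z.length := by
  obtain ⟨x, hx, hxy⟩ := h
  exact hxy.length_eq ▸ hx.length_le

theorem existsSublistForall₂_cons_cons_iff_of_rel {c : α} {b : β} (hcb : R c b)
    (z : List α) (y : List β) :
    ExistsSublistForall₂ R (c :: z) (b :: y) ↔ ExistsSublistForall₂ R z y := by
  constructor
  · rintro ⟨_, hx, hxy⟩
    obtain ⟨_, x, -, htail, rfl⟩ := List.forall₂_cons_right_iff.mp hxy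
    exact ⟨x, hx.of_cons_cons, htail⟩
  · rintro ⟨x, hx, hxy⟩
    exact ⟨c :: x, hx.cons_cons c, .cons hcb hxy⟩

theorem existsSublistForall₂_cons_cons_iff_of_not_rel {c : α} {b : β} (hcb : ¬ R c b)
    (z : List α) (y : List β) :
    ExistsSublistForall₂ R (c :: z) (b :: y) ↔ ExistsSublistForall₂ R z (b :: y) := by
  constructor
  · rintro ⟨_, hx, hxy⟩
    obtain ⟨_, _, hab, -, rfl⟩ := List.forall₂_cons_right_iff.mp hxy
    rcases List.sublist_cons_iff.mp hx with hx | ⟨_, ⟨rfl, -⟩, -⟩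
    · exact ⟨_, hx, hxy⟩
    · exact absurd hab hcb
  · rintro ⟨x, hx, hxy⟩
    exact ⟨x, hx.cons c, hxy⟩

end ExistsSublistForall₂

theorem g_eq_true_iff (y z : List Bool) (t : ℕ) (hlen : z.length ≤ y.length + t) :
    g y z t = true ↔ ExistsSublistForall₂ (· ≤ ·) z y := by
  fun_induction g y z t with
  | case1 z t => exact iff_of_true rfl (existsSublistForall₂_nil_right z)
  | case2 b y t => exact iff_of_false Bool.false_ne_true (not_existsSublistForall₂_nil_cons b y)
  | case3 b y c z t hcb ih =>
    simp only [List.length_cons] at hlen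
    rw [ih (by omega), existsSublistForall₂_cons_cons_iff_of_rel hcb]
  | case4 b y c z hcb =>
    rw [existsSublistForall₂_cons_cons_iff_of_not_rel hcb]
    refine ⟨nofun, fun h => ?_⟩
    have := h.length_le
    simp only [List.length_cons] at hlen this
    omega
  | case5 b y c z hcb t ih =>
    rw [ih (by simp only [List.length_cons] at hlen ⊢; omega),
      existsSublistForall₂_cons_cons_iff_of_not_rel hcb]

theorem greedy_coverage_correct_general
    (m t : ℕ) (y z : List Bool)
    (hy : y.length = m - t) (hz : z.length = m) :
    g y z t = true ↔
      ∃ x : List Bool, x.Sublist z ∧ x.length = m - t ∧ List.Forall₂ (· ≤ ·) x y := by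
  rw [g_eq_true_iff y z t (by omega)]
  constructor
  · rintro ⟨x, hx, hxy⟩
    exact ⟨x, hx, hxy.length_eq.trans hy, hxy⟩
  · rintro ⟨x, hx, -, hxy⟩
    exact ⟨x, hx, hxy⟩

/-- Correctness of the greedy coverage check: for `t ≤ m`, a binary list `y` of length `m - t`
and a binary list `z` of length `m`, `g y z t = true` iff some subsequence `x` of `z` of
length `m - t` is coordinate-wise dominated by `y`. -/
theorem greedy_coverage_correct
    (m t : ℕ) (ht : t ≤ m) (y z : List Bool)
    (hy : y.length = m - t) (hz : z.length = m) :
    g y z t = true ↔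
      ∃ x : List Bool, x.Sublist z ∧ x.length = m - t ∧ List.Forall₂ (· ≤ ·) x y :=
  greedy_coverage_correct_general m t y z hy hz
end

section
/- Fix Δ ≥ 0 and m' ≥ 1. For w ∈ {0,1}^{m'} let rep(w) ∈ {0,1}^{m'(Δ+1)} be the vector obtained by repeating each coordinate of w exactly Δ+1 consecutive times. For a nonempty binary vector v, let GC(v) be the vector obtained by decomposing v into its maximal runs of equal symbols and replacing each maximal run of symbol b of length ℓ by a run of symbol b of length (Δ+1)·⌈ℓ/(Δ+1)⌉. Then for every w ∈ {0,1}^{m'} and every subsequence ỹ of rep(w) of length at least m'(Δ+1) − Δ, we have GC(ỹ) = rep(w). -/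
/-- `rep Δ w` repeats each coordinate of `w` exactly `Δ + 1` consecutive times. -/
def rep (Δ : ℕ) (w : List Bool) : List Bool :=
  w.flatMap fun b => List.replicate (Δ + 1) b

/-- Greedy completion: decompose `v` into its maximal runs of equal symbols and replace each
maximal run of a symbol `b` of length `ℓ` by a run of `b` of length `(Δ+1)·⌈ℓ/(Δ+1)⌉`
(note `⌈ℓ/(Δ+1)⌉ = (ℓ + Δ)/(Δ+1)`). -/
def greedyComplete (Δ : ℕ) (v : List Bool) : List Bool :=
  (v.splitBy (· == ·)).flatMap fun r =>
    List.replicate ((Δ + 1) * ((r.length + Δ) / (Δ + 1))) r.headI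

private theorem rep_comm (m : ℕ) (b : Bool) :
    List.replicate m b ++ [b] = b :: List.replicate m b := by
  rw [← List.replicate_succ', List.replicate_succ]

private theorem myLoop_eq_append {α : Type*} {r : α → α → Bool} {l : List α} {a : α} {g : List α}
    (gs : List (List α)) :
    List.splitBy.loop r l a g gs = gs.reverse ++ List.splitBy.loop r l a g [] := by
  induction l generalizing a g gs with
  | nil => simp [List.splitBy.loop]
  | cons b l IH =>
    simp_rw [List.splitBy.loop]
    split <;> rw [IH]
    conv_rhs => rw [IH]
    simp

private theorem loop_replicate (Δn : ℕ) (b : Bool) (l g : List Bool) (gs : List (List Bool)) :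
    List.splitBy.loop (· == ·) (List.replicate Δn b ++ l) b g gs
      = List.splitBy.loop (· == ·) l b (List.replicate Δn b ++ g) gs := by
  induction Δn generalizing g with
  | zero => rfl
  | succ n IH =>
    have key : List.replicate (n + 1) b ++ g = List.replicate n b ++ (b :: g) := by
      rw [List.replicate_succ', List.append_assoc]
      rfl
    have step : List.splitBy.loop (· == ·) (b :: (List.replicate n b ++ l)) b g gs
        = List.splitBy.loop (· == ·) (List.replicate n b ++ l) b (b :: g) gs := by
      rw [List.splitBy.loop]
      simp
    conv_lhs => rw [List.replicate_succ, List.cons_append]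
    rw [step, IH, key]

private theorem splitBy_replicate_append (n : ℕ) (hn : 0 < n) (b : Bool) (l : List Bool)
    (hl : l.head? ≠ some b) :
    (List.replicate n b ++ l).splitBy (· == ·) = List.replicate n b :: l.splitBy (· == ·) := by
  obtain ⟨m, rfl⟩ : ∃ m, n = m + 1 := ⟨n - 1, by omega⟩
  rw [List.replicate_succ, List.cons_append, List.splitBy, loop_replicate]
  cases l with
  | nil =>
    simp [List.splitBy.loop, List.replicate_succ', rep_comm]
  | cons c l' =>
    have hcb : (b == c) = false := by
      simp only [List.head?_cons, ne_eq, Option.some.injEq] at hl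
      exact beq_eq_false_iff_ne.mpr (fun h => hl h.symm)
    rw [List.splitBy.loop]
    simp only [hcb]
    rw [myLoop_eq_append]
    simp [List.splitBy, List.replicate_succ', rep_comm]

private theorem greedy_append (Δ n : ℕ) (hn : 0 < n) (b : Bool) (l : List Bool)
    (hl : l.head? ≠ some b) :
    greedyComplete Δ (List.replicate n b ++ l)
      = List.replicate ((Δ + 1) * ((n + Δ) / (Δ + 1))) b ++ greedyComplete Δ l := by
  unfold greedyComplete
  rw [splitBy_replicate_append n hn b l hl, List.flatMap_cons, List.length_replicate]
  obtain ⟨m, rfl⟩ : ∃ m, n = m + 1 := ⟨n - 1, by omega⟩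
  rw [List.replicate_succ]
  rfl

private theorem rep_replicate_append (Δ k : ℕ) (b : Bool) (r : List Bool) :
    rep Δ (List.replicate k b ++ r) = List.replicate (k * (Δ + 1)) b ++ rep Δ r := by
  induction k with
  | zero => simp
  | succ k IH =>
    rw [List.replicate_succ, List.cons_append]
    show List.replicate (Δ + 1) b ++ rep Δ (List.replicate k b ++ r) = _
    rw [IH, ← List.append_assoc, ← List.replicate_add]
    congr 2
    ring

private theorem rep_length (Δ : ℕ) (w : List Bool) : (rep Δ w).length = w.length * (Δ + 1) := by
  induction w with
  | nil => simp [rep]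
  | cons b w IH =>
    show (List.replicate (Δ + 1) b ++ rep Δ w).length = _
    simp [IH]; ring

private theorem ceil_eq (Δ n k : ℕ) (hk : 1 ≤ k) (h1 : k * (Δ + 1) - Δ ≤ n)
    (h2 : n ≤ k * (Δ + 1)) : (n + Δ) / (Δ + 1) = k := by
  have hM : Δ + 1 ≤ k * (Δ + 1) := Nat.le_mul_of_pos_left _ hk
  apply Nat.div_eq_of_lt_le
  · omega
  · have : (k + 1) * (Δ + 1) = k * (Δ + 1) + (Δ + 1) := by ring
    omega

private theorem main_lemma (Δ : ℕ) : ∀ (n : ℕ) (w : List Bool), w.length ≤ n → w ≠ [] →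
    ∀ y : List Bool, y.Sublist (rep Δ w) → w.length * (Δ + 1) - Δ ≤ y.length →
    greedyComplete Δ y = rep Δ w := by
  intro n
  induction n with
  | zero => intro w hwn hw; simp at hwn; exact absurd hwn hw
  | succ n IH =>
    intro w hwn hw y hsub hlen
    -- decompose w into its first maximal run
    have hdecomp : ∃ (b : Bool) (k : ℕ) (rest : List Bool), 1 ≤ k ∧
        w = List.replicate k b ++ rest ∧ rest.head? ≠ some b := by
      refine ⟨w.headI, (w.takeWhile (· == w.headI)).length, w.dropWhile (· == w.headI),
        ?_, ?_, ?_⟩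
      · obtain ⟨c, w', rfl⟩ := List.exists_cons_of_ne_nil hw
        simp [List.takeWhile_cons]
      · conv_lhs => rw [← List.takeWhile_append_dropWhile (p := (· == w.headI)) (l := w)]
        congr 1
        apply List.eq_replicate_of_mem
        intro x hx
        simpa using List.mem_takeWhile_imp hx
      · intro h
        have := List.head?_dropWhile_not (· == w.headI) w
        rw [h] at this
        simp at this
    obtain ⟨b, k, rest, hk1, rfl, hresthead⟩ := hdecomp
    simp only [List.length_append, List.length_replicate] at hwn hlen
    rw [rep_replicate_append] at hsub ⊢
    obtain ⟨y1, y2, rfl, hy1, hy2⟩ := List.sublist_append_iff.mp hsub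
    have hy1len : y1.length ≤ k * (Δ + 1) := by
      simpa using hy1.length_le
    have hy2len : y2.length ≤ rest.length * (Δ + 1) := by
      have := hy2.length_le
      rwa [rep_length] at this
    have hy1rep : y1 = List.replicate y1.length b := by
      apply List.eq_replicate_of_mem
      intro x hx
      exact List.eq_of_mem_replicate (hy1.subset hx)
    have hlensum : (k + rest.length) * (Δ + 1) - Δ ≤ y1.length + y2.length := by
      simpa using hlen
    have hadd : (k + rest.length) * (Δ + 1) = k * (Δ + 1) + rest.length * (Δ + 1) := by ring
    have hM : Δ + 1 ≤ k * (Δ + 1) := Nat.le_mul_of_pos_left _ hk1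
    have hy1lb : k * (Δ + 1) - Δ ≤ y1.length := by omega
    have hy1pos : 0 < y1.length := by omega
    rcases eq_or_ne rest [] with hre | hre
    · -- w is a single run
      subst hre
      have : y2 = [] := List.sublist_nil.mp hy2
      subst this
      conv_lhs => rw [hy1rep]
      rw [greedy_append Δ y1.length hy1pos b [] (by simp)]
      rw [ceil_eq Δ y1.length k hk1 hy1lb hy1len]
      show _ = List.replicate (k * (Δ + 1)) b ++ rep Δ []
      simp [rep, greedyComplete, Nat.mul_comm]
    · -- rest is nonempty; find head of y2
      obtain ⟨c, rest', rfl⟩ := List.exists_cons_of_ne_nil hre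
      have hcb : c ≠ b := by
        simp only [List.head?_cons, ne_eq, Option.some.injEq] at hresthead
        exact hresthead
      have hy2lb : (c :: rest').length * (Δ + 1) - Δ ≤ y2.length := by
        simp only [List.length_cons] at *
        have h1 : (k + (rest'.length + 1)) * (Δ + 1)
            = k * (Δ + 1) + (rest'.length + 1) * (Δ + 1) := by ring
        omega
      have hy2head : y2.head? = some c := by
        have hrepcons : rep Δ (c :: rest') = List.replicate (Δ + 1) c ++ rep Δ rest' := rfl
        rw [hrepcons] at hy2
        obtain ⟨z1, z2, rfl, hz1, hz2⟩ := List.sublist_append_iff.mp hy2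
        have hz2len : z2.length ≤ rest'.length * (Δ + 1) := by
          have := hz2.length_le; rwa [rep_length] at this
        have hz1pos : 0 < z1.length := by
          simp only [List.length_cons, List.length_append] at hy2lb
          have : (rest'.length + 1) * (Δ + 1) = rest'.length * (Δ + 1) + (Δ + 1) := by ring
          omega
        have hz1rep : z1 = List.replicate z1.length c := by
          apply List.eq_replicate_of_mem
          intro x hx
          exact List.eq_of_mem_replicate (hz1.subset hx)
        obtain ⟨m, hm⟩ : ∃ m, z1.length = m + 1 := ⟨z1.length - 1, by omega⟩
        rw [hz1rep, hm, List.replicate_succ]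
        rfl
      have hy2headne : y2.head? ≠ some b := by
        rw [hy2head]; simpa using hcb
      conv_lhs => rw [hy1rep]
      rw [greedy_append Δ y1.length hy1pos b y2 hy2headne,
        ceil_eq Δ y1.length k hk1 hy1lb hy1len]
      have hIH : greedyComplete Δ y2 = rep Δ (c :: rest') := by
        apply IH (c :: rest') _ (by simp) y2 hy2 hy2lb
        simp only [List.length_cons] at hwn ⊢
        omega
      rw [hIH, Nat.mul_comm]

/-- For `m' ≥ 1` and any `w ∈ {0,1}^(m')`, every subsequence of `rep Δ w` of length at least
`m'·(Δ+1) - Δ` is greedily completed back to `rep Δ w`. -/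
theorem greedyComplete_of_subseq_rep
    (Δ m' : ℕ) (hm' : 1 ≤ m') (w : List Bool) (hw : w.length = m')
    (yTilde : List Bool) (hsub : yTilde.Sublist (rep Δ w))
    (hlen : m' * (Δ + 1) - Δ ≤ yTilde.length) :
    greedyComplete Δ yTilde = rep Δ w := by
  subst hw
  apply main_lemma Δ w.length w le_rfl _ yTilde hsub hlen
  intro h
  rw [h] at hm'
  simp at hm'
end

section
/- Let C ⊆ {0,…,q−1}^N be a code in which any two distinct codewords have Hamming distance at least D, let Δ ≥ 1, and let q' ≥ Δ(q−1)+1. Define f : {0,…,q−1} → {0,…,q'−1} by f(α) = Δ·α, and let C' = { f∘c : c ∈ C } ⊆ {0,…,q'−1}^N. Then |C'| = |C|, any two distinct codewords of C' have Hamming distance at least D, and C' has the (Δ,D)-ℓ∞ distance property. -/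
/-- Hamming distance between two vectors: number of coordinates where they differ. -/
def hdist {N : ℕ} {α : Type*} [DecidableEq α] (u v : Fin N → α) : ℕ :=
  (Finset.univ.filter fun i => u i ≠ v i).card

/-- Scaling a code by `Δ`: if any two distinct codewords of `C ⊆ {0,…,q-1}^N` are at Hamming
distance at least `D`, `Δ ≥ 1` and `q' ≥ Δ(q-1)+1`, then the image code
`C' = {f ∘ c : c ∈ C}` under `f(α) = Δ·α` has the same size, pairwise Hamming distance at
least `D`, and the `(Δ, D)`-ℓ∞ distance property. -/
theorem scaled_code_linf_property
    (q q' N D Δ : ℕ) (hΔ : 1 ≤ Δ) (hq' : Δ * (q - 1) + 1 ≤ q')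
    (C : Finset (Fin N → Fin q))
    (hC : ∀ c₁ ∈ C, ∀ c₂ ∈ C, c₁ ≠ c₂ → D ≤ hdist c₁ c₂)
    (f : Fin q → Fin q') (hf : ∀ α : Fin q, (f α : ℕ) = Δ * (α : ℕ)) :
    (C.image fun c => f ∘ c).card = C.card ∧
    (∀ c₁' ∈ C.image fun c => f ∘ c, ∀ c₂' ∈ C.image fun c => f ∘ c,
      c₁' ≠ c₂' → D ≤ hdist c₁' c₂') ∧
    (∀ c₁' ∈ C.image fun c => f ∘ c, ∀ c₂' ∈ C.image fun c => f ∘ c,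
      c₁' ≠ c₂' →
        D ≤ (Finset.univ.filter fun i : Fin N =>
          (Δ : ℤ) ≤ |((c₁' i : ℤ) - ((c₂' i : ℕ) : ℤ))|).card) := by
  have hfinj : Function.Injective f := by
    intro a b hab
    have : Δ * (a : ℕ) = Δ * (b : ℕ) := by rw [← hf, ← hf, hab]
    exact Fin.ext (Nat.eq_of_mul_eq_mul_left hΔ this)
  have hinj2 : ∀ c₁ c₂ : Fin N → Fin q, f ∘ c₁ = f ∘ c₂ → c₁ = c₂ := by
    intro c₁ c₂ h
    funext i
    exact hfinj (congrFun h i)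
  constructor
  · exact Finset.card_image_of_injective _ hinj2
  constructor
  · intro c₁' h₁ c₂' h₂ hne
    obtain ⟨c₁, hc₁, rfl⟩ := Finset.mem_image.mp h₁
    obtain ⟨c₂, hc₂, rfl⟩ := Finset.mem_image.mp h₂
    have hne' : c₁ ≠ c₂ := fun h => hne (by rw [h])
    refine le_trans (hC c₁ hc₁ c₂ hc₂ hne') ?_
    unfold hdist
    apply Finset.card_le_card
    intro i hi
    simp only [Finset.mem_filter, Finset.mem_univ, true_and] at hi ⊢
    exact fun h => hi (hfinj h)
  · intro c₁' h₁ c₂' h₂ hne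
    obtain ⟨c₁, hc₁, rfl⟩ := Finset.mem_image.mp h₁
    obtain ⟨c₂, hc₂, rfl⟩ := Finset.mem_image.mp h₂
    have hne' : c₁ ≠ c₂ := fun h => hne (by rw [h])
    refine le_trans (hC c₁ hc₁ c₂ hc₂ hne') ?_
    unfold hdist
    apply Finset.card_le_card
    intro i hi
    simp only [Finset.mem_filter, Finset.mem_univ, true_and, Function.comp] at hi ⊢
    have h1 : ((f (c₁ i) : ℕ) : ℤ) = (Δ : ℤ) * ((c₁ i : ℕ) : ℤ) := by
      rw [hf]; push_cast; ring
    have h2 : ((f (c₂ i) : ℕ) : ℤ) = (Δ : ℤ) * ((c₂ i : ℕ) : ℤ) := by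
      rw [hf]; push_cast; ring
    rw [h1, h2, ← mul_sub, abs_mul, abs_of_nonneg (by positivity : (0:ℤ) ≤ (Δ:ℤ))]
    have : 1 ≤ |((c₁ i : ℕ) : ℤ) - ((c₂ i : ℕ) : ℤ)| := by
      have : ((c₁ i : ℕ) : ℤ) ≠ ((c₂ i : ℕ) : ℤ) := by
        intro h
        exact hi (Fin.ext (by exact_mod_cast h))
      exact Int.one_le_abs (sub_ne_zero.mpr this)
    nlinarith [this, (by exact_mod_cast hΔ : (1:ℤ) ≤ (Δ:ℤ))]
end

section
/- Let N, d be natural numbers, let ℓ ≥ 2, and let c₁,…,c_ℓ ∈ {0,1}^N satisfy d_H(c₁,c₂) ≥ d. Let y ∈ {0,1}^{2N} be the coordinate-wise OR of the ℓ vectors c_j ++ ¬c_j (the concatenation of c_j with its coordinate-wise complement), j = 1,…,ℓ. Then wt(y) ≥ N + d. -/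
/-- Hamming weight of a binary vector: number of coordinates equal to `1`. -/
def wt {N : ℕ} (v : Fin N → Bool) : ℕ :=
  (Finset.univ.filter fun i => v i = true).card

/-- If `ℓ ≥ 2` vectors `c j ∈ {0,1}^N` satisfy `d_H(c 0, c 1) ≥ d`, then the coordinate-wise
OR `y` of the `ℓ` vectors `c j ++ ¬(c j)` has Hamming weight at least `N + d`. -/
theorem wt_or_of_appended_complements
    (N d ℓ : ℕ) (hℓ : 2 ≤ ℓ) (c : Fin ℓ → Fin N → Bool)
    (hd : d ≤ hdist (c ⟨0, by omega⟩) (c ⟨1, by omega⟩))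
    (y : Fin (N + N) → Bool)
    (hy : ∀ r, y r = Finset.univ.sup fun j : Fin ℓ =>
      Fin.append (c j) (fun i => !(c j i)) r) :
    N + d ≤ wt y := by
  classical
  set c0 := c ⟨0, by omega⟩ with hc0
  set c1 := c ⟨1, by omega⟩ with hc1
  have hL : ∀ (i : Fin N) (j : Fin ℓ), c j i = true → y (Fin.castAdd N i) = true := by
    intro i j h
    rw [hy]
    have h1 : (Fin.append (c j) (fun i => !(c j i)) (Fin.castAdd N i)) = true := by
      rw [Fin.append_left]; exact h
    have h2 := Finset.le_sup (f := fun j : Fin ℓ =>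
      Fin.append (c j) (fun i => !(c j i)) (Fin.castAdd N i)) (Finset.mem_univ j)
    simp only [h1] at h2
    exact top_le_iff.mp h2
  have hR : ∀ (i : Fin N) (j : Fin ℓ), c j i = false → y (Fin.natAdd N i) = true := by
    intro i j h
    rw [hy]
    have h1 : (Fin.append (c j) (fun i => !(c j i)) (Fin.natAdd N i)) = true := by
      rw [Fin.append_right]; rw [h]; rfl
    have h2 := Finset.le_sup (f := fun j : Fin ℓ =>
      Fin.append (c j) (fun i => !(c j i)) (Fin.natAdd N i)) (Finset.mem_univ j)
    simp only [h1] at h2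
    exact top_le_iff.mp h2
  have key : ∀ i : Fin N,
      1 + (if c0 i ≠ c1 i then 1 else 0) ≤
      (if y (Fin.castAdd N i) = true then 1 else 0)
        + (if y (Fin.natAdd N i) = true then 1 else 0) := by
    intro i
    rcases Bool.eq_false_or_eq_true (c0 i) with h0 | h0 <;>
      rcases Bool.eq_false_or_eq_true (c1 i) with h1 | h1
    · rw [hL i ⟨0, by omega⟩ h0]
      simp [h0, h1]
    · rw [hL i ⟨0, by omega⟩ h0, hR i ⟨1, by omega⟩ h1]
      simp [h0, h1]
    · rw [hR i ⟨0, by omega⟩ h0, hL i ⟨1, by omega⟩ h1]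
      simp [h0, h1]
    · rw [hR i ⟨0, by omega⟩ h0]
      simp [h0, h1]
  have hwt : wt y = ∑ i : Fin N, ((if y (Fin.castAdd N i) = true then 1 else 0)
      + (if y (Fin.natAdd N i) = true then 1 else 0)) := by
    rw [wt, Finset.card_filter, Fin.sum_univ_add, ← Finset.sum_add_distrib]
  have hhd : hdist c0 c1 = ∑ i : Fin N, (if c0 i ≠ c1 i then 1 else 0) := by
    rw [hdist, Finset.card_filter]
  calc N + d ≤ N + hdist c0 c1 := by omega
    _ = ∑ i : Fin N, (1 + (if c0 i ≠ c1 i then 1 else 0)) := by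
        rw [Finset.sum_add_distrib, hhd]; simp
    _ ≤ _ := by rw [hwt]; exact Finset.sum_le_sum fun i _ => key i
end

section
/- Let c ∈ {0,1}^N and let Δ be a natural number with Δ ≤ N. If ỹ is a subsequence of the concatenation c ++ ¬c (a binary vector of length 2N) of length at least 2N − Δ, then the vector formed by the first N − Δ coordinates of ỹ is a subsequence of c. -/
/-- If `yTilde` is a subsequence of `c ++ ¬c` (length `2N`) of length `L ≥ 2N - Δ`, where
`Δ ≤ N`, then the first `N - Δ` coordinates of `yTilde` form a subsequence of `c`. -/
theorem prefix_of_subseq_append_complement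
    (N Δ L : ℕ) (hΔ : Δ ≤ N) (c : Fin N → Bool)
    (yTilde : Fin L → Bool) (hL : 2 * N - Δ ≤ L)
    (hsub : IsSubseq yTilde (Fin.append c fun i => !(c i))) :
    IsSubseq (fun i : Fin (N - Δ) => yTilde (Fin.castLE (by omega) i)) c := by
  obtain ⟨f, hf, hv⟩ := hsub
  -- step lemma: f i + k ≤ f (i+k)
  have step : ∀ (k : ℕ) (i : Fin L) (h : (i : ℕ) + k < L),
      (f i : ℕ) + k ≤ (f ⟨(i : ℕ) + k, h⟩ : ℕ) := by
    intro k
    induction k with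
    | zero => intro i h; simp
    | succ k ih =>
      intro i h
      have h' : (i : ℕ) + k < L := by omega
      have h1 := ih i h'
      have h2 : f ⟨(i : ℕ) + k, h'⟩ < f ⟨(i : ℕ) + (k + 1), h⟩ := by
        apply hf
        simp [Fin.lt_def]
      have := Fin.lt_def.mp h2
      omega
  have bound : ∀ i : Fin L, (f i : ℕ) + (L - 1 - i) < N + N := by
    intro i
    have hL0 : 0 < L := i.pos
    have h : (i : ℕ) + (L - 1 - i) < L := by omega
    have := step (L - 1 - i) i h
    have := (f ⟨(i : ℕ) + (L - 1 - i), h⟩).isLt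
    omega
  have hlt : ∀ i : Fin (N - Δ), (f (Fin.castLE (by omega) i) : ℕ) < N := by
    intro i
    have := bound (Fin.castLE (by omega : N - Δ ≤ L) i)
    have hi := i.isLt
    simp only [Fin.coe_castLE] at this
    omega
  refine ⟨fun i => ⟨(f (Fin.castLE (by omega) i) : ℕ), hlt i⟩, ?_, ?_⟩
  · intro i j hij
    have : Fin.castLE (by omega : N - Δ ≤ L) i < Fin.castLE (by omega) j :=
      Fin.lt_def.mpr (Fin.lt_def.mp hij)
    exact Fin.lt_def.mpr (Fin.lt_def.mp (hf this))
  · intro i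
    show yTilde (Fin.castLE (by omega) i) = c ⟨(f (Fin.castLE (by omega) i) : ℕ), hlt i⟩
    rw [hv (Fin.castLE (by omega) i)]
    have key : ∀ (x : Fin (N + N)) (h : (x : ℕ) < N),
        Fin.append c (fun i => !(c i)) x = c ⟨(x : ℕ), h⟩ := by
      intro x h
      exact Fin.append_left c _ ⟨(x : ℕ), h⟩
    exact key _ (hlt i)
end
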